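/- arXiv:2009.02446 — 5 statements merged into one kernel-verified Lean document; each statement's English description precedes it below -/
import Mathlib

section
/- The sum of reciprocals of Fibonacci numbers indexed by powers of two equals (7 - √5)/2, i.e., ∑_{k=0}^∞ 1/F_{2^k} = (7 - √5)/2, where F_1 = F_2 = 1 is the Fibonacci sequence (with F_1 = 1 as the first term, so F_{2^0} = F_1 = 1). -/
/-!
For even `m ≥ 2`, a consequence of Cassini's identity gives
`1 / F (2m) = F (m+1) / F m - F (2m+1) / F (2m)`, so the series telescopes:
`∑_{k ≤ n} 1 / F (2^k) = 4 - F (2^n + 1) / F (2^n)` for `n ≥ 1`. Since `F (N+1) / F N → φ`,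
the sum is `4 - φ = (7 - √5) / 2`.
-/

open Filter Finset Real
open scoped goldenRatio Topology

theorem fib_succ_mul_fib_two_mul_sub_fib_mul_fib_two_mul_add_one (m : ℕ) :
    (Nat.fib (m + 1) * Nat.fib (2 * m) - Nat.fib m * Nat.fib (2 * m + 1) : ℤ) =
      (-1) ^ m * Nat.fib m := by
  have cassini := Int.fib_succ_mul_fib_pred_sub_fib_sq ((m : ℤ) + 1)
  rw [add_sub_cancel_right, add_assoc, one_add_one_eq_two, Int.fib_add_two] at cassini
  have two_mul := Int.fib_two_mul m
  have two_mul_add_one := Int.fib_two_mul_add_one m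
  push_cast [← Int.fib_natCast] at *
  rw [two_mul, two_mul_add_one, show ((m : ℤ) + 1).natAbs = m + 1 by omega, pow_succ] at *
  linear_combination (-(Int.fib m)) * cassini

theorem one_div_fib_two_mul_of_even {m : ℕ} (hm : Even m) (hm0 : m ≠ 0) :
    1 / (Nat.fib (2 * m) : ℝ) =
      Nat.fib (m + 1) / Nat.fib m - Nat.fib (2 * m + 1) / Nat.fib (2 * m) := by
  have h := fib_succ_mul_fib_two_mul_sub_fib_mul_fib_two_mul_add_one m
  rw [hm.neg_one_pow, one_mul] at h
  have hℝ : (Nat.fib (m + 1) * Nat.fib (2 * m) - Nat.fib m * Nat.fib (2 * m + 1) : ℝ) =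
      Nat.fib m := by exact_mod_cast h
  have hfib : (Nat.fib m : ℝ) ≠ 0 := by simpa using hm0
  have hfib2 : (Nat.fib (2 * m) : ℝ) ≠ 0 := by simpa using hm0
  field_simp
  linear_combination -hℝ

theorem sum_one_div_fib_two_pow (n : ℕ) :
    ∑ k ∈ range (n + 2), 1 / (Nat.fib (2 ^ k) : ℝ) =
      4 - Nat.fib (2 ^ (n + 1) + 1) / Nat.fib (2 ^ (n + 1)) := by
  induction n with
  | zero => norm_num [sum_range_succ]
  | succ n ih =>
    rw [sum_range_succ, ih, pow_succ' 2 (n + 1),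
      one_div_fib_two_mul_of_even (Nat.even_pow.mpr ⟨even_two, n.succ_ne_zero⟩) (by positivity)]
    ring

theorem four_sub_goldenRatio : 4 - φ = (7 - √5) / 2 := by
  rw [goldenRatio]; ring

/-- The Millin series: `∑_{k=0}^∞ 1/F_{2^k} = (7 - √5)/2` where `F` is the Fibonacci
sequence with `F_1 = F_2 = 1` (so `F_{2^0} = F_1 = 1`). -/
theorem millin_series :
    ∑' k : ℕ, (1 : ℝ) / (Nat.fib (2 ^ k) : ℝ) = (7 - Real.sqrt 5) / 2 := by
  have two_pow_succ : Tendsto (fun n : ℕ => 2 ^ (n + 1)) atTop atTop :=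
    (tendsto_pow_atTop_atTop_of_one_lt one_lt_two).comp (tendsto_add_atTop_nat 1)
  have partial_sums : Tendsto (fun n => ∑ k ∈ range n, 1 / (Nat.fib (2 ^ k) : ℝ)) atTop
      (𝓝 (4 - φ)) := by
    rw [← tendsto_add_atTop_iff_nat 2]
    simp only [sum_one_div_fib_two_pow]
    exact (tendsto_fib_succ_div_fib_atTop.comp two_pow_succ).const_sub 4
  rw [← four_sub_goldenRatio]
  exact ((hasSum_iff_tendsto_nat_of_nonneg (fun k => by positivity) _).mpr partial_sums).tsum_eq
end

section
/- Let c > 2 and let n_1 < n_2 < ... be positive integers with n_{k+1}/n_k ≥ c for all k. Then the series ∑_{k=1}^∞ 1/F_{n_k} converges to an irrational number. -/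
/-!
If `m` grows geometrically with ratio `c > 2`, then `∑_{j<K} m_j ≤ m_K / (c - 1)`, so
`m_K - ∑_{j<K} m_j → ∞`. Multiplying the series by `P_K = ∏_{j<K} F_{m_j} ≤ φ ^ ∑_{j<K} m_j` turns
its first `K` terms into an integer and leaves `P_K` times the tail, which is positive and at most
a constant times `φ ^ (∑_{j<K} m_j - m_K)`. So the series has integer approximations
`P_K x - N_K ∈ (0, ε)` for every `ε > 0`, which a rational number cannot have.
-/

open Finset Filter
open scoped goldenRatio

namespace Real

lemma fib_le_goldenRatio_pow (n : ℕ) : (Nat.fib n : ℝ) ≤ φ ^ n := by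
  cases n with
  | zero => simp
  | succ n =>
    have hψ : ψ * Nat.fib n ≤ 0 :=
      mul_nonpos_of_nonpos_of_nonneg goldenConj_neg.le (Nat.cast_nonneg _)
    calc (Nat.fib (n + 1) : ℝ) ≤ φ ^ n := by linarith [fib_succ_sub_goldenConj_mul_fib n]
      _ ≤ φ ^ (n + 1) := pow_le_pow_right₀ one_lt_goldenRatio.le n.le_succ

lemma one_div_fib_le {n : ℕ} (hn : n ≠ 0) : 1 / (Nat.fib n : ℝ) ≤ φ ^ 2 * φ⁻¹ ^ n := by
  obtain ⟨n, rfl⟩ := Nat.exists_eq_add_one_of_ne_zero hn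
  have hfib : (Nat.fib n : ℝ) ≤ Nat.fib (n + 1) := mod_cast Nat.fib_le_fib_succ
  have hpos : (0 : ℝ) < Nat.fib (n + 1) := mod_cast Nat.fib_pos.mpr n.succ_pos
  have key : φ ^ (n + 1) ≤ φ ^ 2 * Nat.fib (n + 1) := by
    rw [← goldenRatio_mul_fib_succ_add_fib, goldenRatio_sq]; linarith
  rwa [inv_pow, ← div_eq_mul_inv, div_le_div_iff₀ hpos (pow_pos goldenRatio_pos _), one_mul]

lemma inv_goldenRatio_lt_one : φ⁻¹ < 1 := inv_lt_one_of_one_lt₀ one_lt_goldenRatio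

end Real

open Real

lemma irrational_of_exists_mul_sub_mem_Ioo {x : ℝ}
    (h : ∀ ε > 0, ∃ (q : ℕ) (p : ℤ), q * x - p ∈ Set.Ioo 0 ε) : Irrational x := by
  rintro ⟨r, rfl⟩
  have hden : (0 : ℝ) < r.den := mod_cast r.pos
  obtain ⟨q, p, hpos, hlt⟩ := h (1 / r.den) (by positivity)
  have hz : ((q * r.num - p * r.den : ℤ) : ℝ) = r.den * (q * r - p) := by
    push_cast
    rw [Rat.cast_def]
    field_simp
  have h₁ : (0 : ℤ) < q * r.num - p * r.den := by
    exact_mod_cast hz ▸ mul_pos hden hpos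
  have h₂ : q * r.num - p * r.den < (1 : ℤ) := by
    have := mul_lt_mul_of_pos_left hlt hden
    rw [mul_one_div_cancel hden.ne'] at this
    exact_mod_cast hz ▸ this
  omega

lemma exists_natCast_eq_prod_mul_sum_one_div {ι K : Type*} [Field K] [CharZero K]
    (s : Finset ι) {d : ι → ℕ} (hd : ∀ j ∈ s, d j ≠ 0) :
    ∃ N : ℕ, ((∏ j ∈ s, d j : ℕ) : K) * ∑ j ∈ s, 1 / (d j : K) = N := by
  refine ⟨∑ j ∈ s, (∏ i ∈ s, d i) / d j, ?_⟩
  rw [Nat.cast_sum, mul_sum]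
  refine sum_congr rfl fun j hj ↦ ?_
  rw [Nat.cast_div (dvd_prod_of_mem d hj) (mod_cast hd j hj), mul_one_div]

section Growth

variable {c : ℝ}

lemma strictMono_of_one_lt_mul_le {a : ℕ → ℝ} (hc : 1 < c) (h₀ : 0 < a 0)
    (h : ∀ k, c * a k ≤ a (k + 1)) : StrictMono a := by
  have hpos : ∀ k, 0 < a k := by
    intro k
    induction k with
    | zero => exact h₀
    | succ k ih => nlinarith [h k]
  exact strictMono_nat_of_lt_succ fun k ↦ by nlinarith [h k, hpos k]

lemma sum_range_le_div_sub_one {a : ℕ → ℝ} (hc : 1 < c) (h₀ : 0 ≤ a 0)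
    (h : ∀ k, c * a k ≤ a (k + 1)) (K : ℕ) : ∑ j ∈ range K, a j ≤ a K / (c - 1) := by
  have hc₁ : 0 < c - 1 := sub_pos.2 hc
  induction K with
  | zero => simpa using div_nonneg h₀ hc₁.le
  | succ K ih =>
    rw [le_div_iff₀ hc₁] at ih ⊢
    rw [sum_range_succ]
    linarith [h K]

lemma exists_sum_range_add_le {m : ℕ → ℕ} (hc : 2 < c) (hm : StrictMono m)
    (h : ∀ k, c * m k ≤ m (k + 1)) (M : ℕ) : ∃ K, ∑ j ∈ range K, m j + M ≤ m K := by
  have hc₂ : 0 < c - 2 := sub_pos.2 hc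
  have hm' : Tendsto (fun k ↦ (m k : ℝ)) atTop atTop :=
    tendsto_natCast_atTop_atTop.comp hm.tendsto_atTop
  obtain ⟨K, hK⟩ := (hm'.eventually_ge_atTop (M * (c - 1) / (c - 2))).exists
  refine ⟨K, ?_⟩
  have hsum := sum_range_le_div_sub_one (a := fun k ↦ (m k : ℝ)) (by linarith)
    (Nat.cast_nonneg _) h K
  rw [div_le_iff₀ hc₂] at hK
  rw [le_div_iff₀ (by linarith)] at hsum
  have : ((∑ j ∈ range K, m j + M : ℕ) : ℝ) ≤ m K := by push_cast; nlinarith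
  exact_mod_cast this

end Growth

lemma pow_mul_inv_pow_le_inv_pow {α : Type*} [Field α] [LinearOrder α] [IsStrictOrderedRing α]
    {x : α} (hx : 1 ≤ x) {a b c : ℕ} (h : a + b ≤ c) : x ^ a * x⁻¹ ^ c ≤ x⁻¹ ^ b := by
  have hx₀ : 0 < x := zero_lt_one.trans_le hx
  calc x ^ a * x⁻¹ ^ c ≤ x ^ a * x⁻¹ ^ (a + b) :=
        mul_le_mul_of_nonneg_left (pow_le_pow_of_le_one (by positivity) (inv_le_one_of_one_le₀ hx) h)
          (by positivity)
    _ = x⁻¹ ^ b := by rw [pow_add, ← mul_assoc, ← mul_pow, mul_inv_cancel₀ hx₀.ne', one_pow, one_mul]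

section Geometric

variable {m : ℕ → ℕ} {r : ℝ}

lemma pow_comp_le_of_strictMono (hr₀ : 0 ≤ r) (hr₁ : r ≤ 1) (hm : StrictMono m) (k : ℕ) :
    r ^ m k ≤ r ^ m 0 * r ^ k := by
  rw [← pow_add]
  exact pow_le_pow_of_le_one hr₀ hr₁ (by simpa [add_comm] using hm.add_le_nat k 0)

lemma summable_pow_comp_of_strictMono (hr₀ : 0 ≤ r) (hr₁ : r < 1) (hm : StrictMono m) :
    Summable fun k ↦ r ^ m k :=
  ((summable_geometric_of_lt_one hr₀ hr₁).mul_left _).of_nonneg_of_le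
    (fun _ ↦ pow_nonneg hr₀ _) (pow_comp_le_of_strictMono hr₀ hr₁.le hm)

lemma tsum_pow_comp_le_of_strictMono (hr₀ : 0 ≤ r) (hr₁ : r < 1) (hm : StrictMono m) :
    ∑' k, r ^ m k ≤ r ^ m 0 / (1 - r) :=
  calc ∑' k, r ^ m k ≤ ∑' k, r ^ m 0 * r ^ k :=
        (summable_pow_comp_of_strictMono hr₀ hr₁ hm).tsum_le_tsum
          (pow_comp_le_of_strictMono hr₀ hr₁.le hm)
          ((summable_geometric_of_lt_one hr₀ hr₁).mul_left _)
    _ = r ^ m 0 / (1 - r) := by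
        rw [tsum_mul_left, tsum_geometric_of_lt_one hr₀ hr₁, div_eq_mul_inv]

end Geometric

section FibonacciSeries

variable {m : ℕ → ℕ}

lemma prod_fib_le_goldenRatio_pow_sum {ι : Type*} (s : Finset ι) (d : ι → ℕ) :
    ((∏ j ∈ s, Nat.fib (d j) : ℕ) : ℝ) ≤ φ ^ ∑ j ∈ s, d j := by
  rw [Nat.cast_prod, ← prod_pow_eq_pow_sum]
  exact prod_le_prod (fun _ _ ↦ Nat.cast_nonneg _) fun j _ ↦ fib_le_goldenRatio_pow _

lemma one_div_fib_comp_le (hm : StrictMono m) (h₀ : 0 < m 0) (k : ℕ) :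
    1 / (Nat.fib (m k) : ℝ) ≤ φ ^ 2 * φ⁻¹ ^ m k :=
  one_div_fib_le (h₀.trans_le (hm.monotone k.zero_le)).ne'

lemma summable_one_div_fib_comp (hm : StrictMono m) (h₀ : 0 < m 0) :
    Summable fun k ↦ 1 / (Nat.fib (m k) : ℝ) :=
  ((summable_pow_comp_of_strictMono (by positivity)
    inv_goldenRatio_lt_one hm).mul_left _).of_nonneg_of_le (fun _ ↦ by positivity)
    (one_div_fib_comp_le hm h₀)

lemma tsum_one_div_fib_comp_le (hm : StrictMono m) (h₀ : 0 < m 0) :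
    ∑' k, 1 / (Nat.fib (m k) : ℝ) ≤ φ ^ 2 / (1 - φ⁻¹) * φ⁻¹ ^ m 0 := by
  have hφ₀ : 0 ≤ φ⁻¹ := by positivity
  calc ∑' k, 1 / (Nat.fib (m k) : ℝ) ≤ ∑' k, φ ^ 2 * φ⁻¹ ^ m k :=
        (summable_one_div_fib_comp hm h₀).tsum_le_tsum (one_div_fib_comp_le hm h₀)
          ((summable_pow_comp_of_strictMono hφ₀ inv_goldenRatio_lt_one hm).mul_left _)
    _ ≤ φ ^ 2 * (φ⁻¹ ^ m 0 / (1 - φ⁻¹)) := by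
        rw [tsum_mul_left]
        gcongr
        exact tsum_pow_comp_le_of_strictMono hφ₀ inv_goldenRatio_lt_one hm
    _ = φ ^ 2 / (1 - φ⁻¹) * φ⁻¹ ^ m 0 := by ring

lemma exists_prod_fib_mul_tsum_sub_mem_Ioc (hm : StrictMono m) (h₀ : 0 < m 0)
    (K : ℕ) : ∃ N : ℕ, ((∏ j ∈ range K, Nat.fib (m j) : ℕ) : ℝ) *
      ∑' k, 1 / (Nat.fib (m k) : ℝ) - N ∈
        Set.Ioc 0 (φ ^ 2 / (1 - φ⁻¹) * (φ ^ (∑ j ∈ range K, m j) * φ⁻¹ ^ m K)) := by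
  have hfib : ∀ j, Nat.fib (m j) ≠ 0 :=
    fun j ↦ (Nat.fib_pos.2 (h₀.trans_le (hm.monotone j.zero_le))).ne'
  obtain ⟨N, hN⟩ := exists_natCast_eq_prod_mul_sum_one_div (K := ℝ) (range K)
    (d := fun j ↦ Nat.fib (m j)) fun j _ ↦ hfib j
  set P := ∏ j ∈ range K, Nat.fib (m j)
  have hmK : StrictMono fun k ↦ m (k + K) := hm.comp (strictMono_id.add_const K)
  have hP : (0 : ℝ) < P := mod_cast Nat.pos_of_ne_zero (prod_ne_zero_iff.2 fun j _ ↦ hfib j)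
  have hmK₀ : 0 < m (0 + K) := h₀.trans_le (hm.monotone (Nat.zero_le _))
  have hT : 0 < ∑' k, 1 / (Nat.fib (m (k + K)) : ℝ) :=
    (summable_one_div_fib_comp hmK hmK₀).tsum_pos
      (fun _ ↦ by positivity) 0 (by simpa using Nat.pos_of_ne_zero (hfib K))
  refine ⟨N, ?_⟩
  rw [← (summable_one_div_fib_comp hm h₀).sum_add_tsum_nat_add K, mul_add, hN, add_sub_cancel_left]
  refine ⟨mul_pos hP hT, ?_⟩
  calc (P : ℝ) * ∑' k, 1 / (Nat.fib (m (k + K)) : ℝ)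
      ≤ φ ^ (∑ j ∈ range K, m j) * (φ ^ 2 / (1 - φ⁻¹) * φ⁻¹ ^ m (0 + K)) :=
        mul_le_mul (prod_fib_le_goldenRatio_pow_sum _ _)
          (tsum_one_div_fib_comp_le hmK hmK₀) hT.le (by positivity)
    _ = _ := by rw [zero_add]; ring

end FibonacciSeries

theorem sum_reciprocal_fib_irrational_general (c : ℝ) (hc : 2 < c) (n : ℕ → ℕ)
    (hpos : 0 < n 1)
    (hratio : ∀ k, 1 ≤ k → c * (n k : ℝ) ≤ (n (k + 1) : ℝ)) :
    Irrational (∑' k : ℕ, (1 : ℝ) / (Nat.fib (n (k + 1)) : ℝ)) := by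
  set m : ℕ → ℕ := fun k ↦ n (k + 1)
  have hgrowth : ∀ k, c * m k ≤ m (k + 1) := fun k ↦ hratio (k + 1) k.succ_pos
  have hm : StrictMono m := fun a b hab ↦ Nat.cast_lt.1 <|
    strictMono_of_one_lt_mul_le (a := fun k ↦ (m k : ℝ)) (by linarith) (mod_cast hpos) hgrowth hab
  set D := φ ^ 2 / (1 - φ⁻¹)
  refine irrational_of_exists_mul_sub_mem_Ioo fun ε hε ↦ ?_
  obtain ⟨M, hM⟩ : ∃ M : ℕ, D * φ⁻¹ ^ M < ε :=
    (((tendsto_pow_atTop_nhds_zero_of_lt_one (by positivity)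
      inv_goldenRatio_lt_one).const_mul D).eventually (gt_mem_nhds (by simpa using hε))).exists
  obtain ⟨K, hK⟩ := exists_sum_range_add_le hc hm hgrowth M
  obtain ⟨N, hN₀, hNε⟩ := exists_prod_fib_mul_tsum_sub_mem_Ioc hm hpos K
  refine ⟨_, N, hN₀, hNε.trans_lt (lt_of_le_of_lt ?_ hM)⟩
  have hD : 0 < D := div_pos (by positivity) (sub_pos.2 inv_goldenRatio_lt_one)
  exact mul_le_mul_of_nonneg_left (pow_mul_inv_pow_le_inv_pow one_lt_goldenRatio.le hK) hD.le

/-- If `c > 2` and `n_1 < n_2 < ...` are positive integers with `n_{k+1}/n_k ≥ c`, then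
`∑_{k=1}^∞ 1/F_{n_k}` is irrational. -/
theorem sum_reciprocal_fib_irrational (c : ℝ) (hc : 2 < c) (n : ℕ → ℕ)
    (hpos : 0 < n 1)
    (hmono : ∀ k, 1 ≤ k → n k < n (k + 1))
    (hratio : ∀ k, 1 ≤ k → c * (n k : ℝ) ≤ (n (k + 1) : ℝ)) :
    Irrational (∑' k : ℕ, (1 : ℝ) / (Nat.fib (n (k + 1)) : ℝ)) :=
  sum_reciprocal_fib_irrational_general c hc n hpos hratio
end

section
/- Let α be a real quadratic unit with |α| > 1 and conjugate β with |β| < 1. Suppose (a_n), (b_n) are sequences in ℚ(α) with a_n·b_n ≠ 0, h(a_n)/n → 0 and h(b_n)/n → 0, and u_n := a_n·α^n - b_n·β^n ∈ ℚ for all n. Then |u_n| = |α|^{n + o(n)} as n → ∞; that is, log|u_n| / n → log|α|. -/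
/-!
For a nonzero algebraic number `x` of degree `d` we have `|log |x|| ≤ d · h(x)`: from above because
`|x|` is one of the conjugates counted in `d · h(x) = log D + ∑ log⁺ |z|`, from below because the
constant coefficient of the minimal polynomial is a nonzero rational with denominator dividing `D`,
so `D · ∏ |z| ≥ 1`. Hence `log |a n|` and `log |b n|` are `o(n)`, the ratio
`(b n β ^ n) / (a n α ^ n)` tends to `0` since `|β| < |α|`, and
`log |u n| = log |a n| + n log |α| + o(1)`.
-/

open IntermediateField Filter

/-- The absolute logarithmic Weil height of an algebraic real number, computed from its
minimal polynomial over `ℚ`: if `p` is the monic minimal polynomial of degree `d`, with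
`D` the least common multiple of the denominators of its coefficients (so that `D·p` is
the primitive integer minimal polynomial), then
`h(x) = (1/d)·(log D + ∑_{roots z of p in ℂ} log⁺|z|)`. -/
noncomputable def logHeight (x : ℝ) : ℝ :=
  (1 / ((minpoly ℚ x).natDegree : ℝ)) *
    (Real.log (((minpoly ℚ x).support.lcm fun i => ((minpoly ℚ x).coeff i).den : ℕ) : ℝ) +
      (((minpoly ℚ x).aroots ℂ).map fun z => Real.log (max 1 ‖z‖)).sum)

open Polynomial Real Topology

lemma one_le_mul_abs_of_den_dvd {q : ℚ} (hq : q ≠ 0) {D : ℕ} (hdvd : q.den ∣ D)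
    (hD : D ≠ 0) : (1 : ℝ) ≤ D * |(q : ℝ)| := by
  obtain ⟨k, rfl⟩ := hdvd
  have hk : (1 : ℝ) ≤ k := by exact_mod_cast Nat.one_le_iff_ne_zero.2 (right_ne_zero_of_mul hD)
  have hnum : (1 : ℝ) ≤ |(q.num : ℝ)| := by exact_mod_cast Int.one_le_abs (Rat.num_ne_zero.2 hq)
  have hden : |(q : ℝ)| * q.den = |(q.num : ℝ)| := by
    rw [← Nat.abs_cast q.den, ← abs_mul]
    exact_mod_cast congrArg abs (Rat.mul_den_eq_num q)
  push_cast
  nlinarith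

section NormedField

variable {𝕜 : Type*} [NormedField 𝕜] {s : Multiset 𝕜} {z : 𝕜}

lemma log_norm_le_sum_posLog_norm (hz : z ∈ s) : log ‖z‖ ≤ (s.map fun w => log⁺ ‖w‖).sum :=
  (le_max_right 0 _).trans <| Multiset.single_le_sum
    (Multiset.forall_mem_map_iff.2 fun _ _ => posLog_nonneg) _ (Multiset.mem_map_of_mem _ hz)

lemma neg_log_norm_le_sum_posLog_norm_sub_log_norm_prod (hs : s.prod ≠ 0) (hz : z ∈ s) :
    -log ‖z‖ ≤ (s.map fun w => log⁺ ‖w‖).sum - log ‖s.prod‖ := by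
  have hlog_prod : log ‖s.prod‖ = (s.map fun w => log ‖w‖).sum := by
    have hnorm : ‖s.prod‖ = (s.map (‖·‖)).prod := map_multiset_prod normHom s
    rw [hnorm, log_multiset_prod, Multiset.map_map]
    · rfl
    · simp only [Multiset.mem_map]
      rintro _ ⟨w, hw, rfl⟩
      exact norm_ne_zero_iff.2 fun h => hs (Multiset.prod_eq_zero (h ▸ hw))
  rw [hlog_prod, ← Multiset.sum_map_sub]
  calc -log ‖z‖ = log ‖z‖⁻¹ := (log_inv _).symm
    _ ≤ log⁺ ‖z‖⁻¹ := le_max_right 0 _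
    _ = log⁺ ‖z‖ - log ‖z‖ := by rw [← posLog_sub_posLog_inv]; ring
    _ ≤ _ := Multiset.single_le_sum
          (Multiset.forall_mem_map_iff.2 fun _ _ => sub_nonneg.2 (le_max_right _ _)) _
          (Multiset.mem_map_of_mem (fun w => log⁺ ‖w‖ - log ‖w‖) hz)

end NormedField

lemma Polynomial.Monic.abs_coeff_zero_eq_norm_prod_aroots {p : ℚ[X]} (hp : p.Monic) :
    |(p.coeff 0 : ℝ)| = ‖(p.aroots ℂ).prod‖ := by
  have := (IsAlgClosed.splits (p.map (algebraMap ℚ ℂ))).coeff_zero_eq_prod_roots_of_monic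
    (hp.map _)
  rw [coeff_map] at this
  rw [← Complex.norm_ratCast, ← eq_ratCast (algebraMap ℚ ℂ), this]
  simp [aroots]

lemma natDegree_mul_logHeight {x : ℝ} (hx : IsIntegral ℚ x) :
    (minpoly ℚ x).natDegree * logHeight x =
      log ((minpoly ℚ x).support.lcm fun i => ((minpoly ℚ x).coeff i).den : ℕ) +
        (((minpoly ℚ x).aroots ℂ).map fun z => log⁺ ‖z‖).sum := by
  have hdeg : ((minpoly ℚ x).natDegree : ℝ) ≠ 0 := by
    exact_mod_cast (minpoly.natDegree_pos hx).ne'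
  simp only [logHeight, ← mul_assoc, one_div, mul_inv_cancel₀ hdeg, one_mul,
    posLog_eq_log_max_one (norm_nonneg _)]

theorem abs_log_abs_le_natDegree_mul_logHeight {x : ℝ} (hx : IsIntegral ℚ x) (hx0 : x ≠ 0) :
    |log (|x|)| ≤ (minpoly ℚ x).natDegree * logHeight x := by
  rw [natDegree_mul_logHeight hx]
  set p := minpoly ℚ x
  set D := p.support.lcm fun i => (p.coeff i).den
  have hD : D ≠ 0 := by
    simp only [D, Ne, Finset.lcm_eq_zero_iff, not_exists, not_and]
    exact fun i _ => (p.coeff i).den_nz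
  have hroot : (x : ℂ) ∈ p.aroots ℂ := by
    refine mem_aroots.2 ⟨minpoly.ne_zero hx, ?_⟩
    rw [← Complex.coe_algebraMap, aeval_algebraMap_apply, minpoly.aeval, map_zero]
  have hprod : |(p.coeff 0 : ℝ)| = ‖(p.aroots ℂ).prod‖ :=
    (minpoly.monic hx).abs_coeff_zero_eq_norm_prod_aroots
  have hcoeff0 : p.coeff 0 ≠ 0 := minpoly.coeff_zero_ne_zero hx hx0
  have habs_coeff0 : |(p.coeff 0 : ℝ)| ≠ 0 := abs_ne_zero.2 (Rat.cast_ne_zero.2 hcoeff0)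
  have hnorm_x : ‖(x : ℂ)‖ = |x| := Complex.norm_real x
  rw [abs_le]
  constructor
  · have hlow := neg_log_norm_le_sum_posLog_norm_sub_log_norm_prod
      (norm_ne_zero_iff.1 (hprod ▸ habs_coeff0)) hroot
    have hcoeff_ge : -log D ≤ log |(p.coeff 0 : ℝ)| := by
      have := one_le_mul_abs_of_den_dvd hcoeff0
        (Finset.dvd_lcm (f := fun i => (p.coeff i).den) (mem_support_iff.2 hcoeff0)) hD
      have hlog := log_le_log one_pos this
      rw [log_one, log_mul (by exact_mod_cast hD) habs_coeff0] at hlog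
      linarith
    rw [hnorm_x, ← hprod] at hlow
    linarith
  · have := log_norm_le_sum_posLog_norm hroot
    rw [hnorm_x] at this
    linarith [log_natCast_nonneg D]

section FiniteDimensional

variable {K : IntermediateField ℚ ℝ} [FiniteDimensional ℚ K]

theorem abs_log_abs_le_finrank_mul_logHeight {x : ℝ} (hx : x ∈ K) (hx0 : x ≠ 0) :
    |log (|x|)| ≤ Module.finrank ℚ K * logHeight x := by
  have hint : IsIntegral ℚ x := (isIntegral_iff (x := (⟨x, hx⟩ : K))).1 (.of_finite ℚ _)
  have hdeg : (minpoly ℚ x).natDegree ≤ Module.finrank ℚ K := by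
    rw [← minpoly_eq (⟨x, hx⟩ : K)]
    exact minpoly.natDegree_le _
  have hbound := abs_log_abs_le_natDegree_mul_logHeight hint hx0
  have hdeg_pos : (0 : ℝ) < (minpoly ℚ x).natDegree := by
    exact_mod_cast minpoly.natDegree_pos hint
  have hheight : 0 ≤ logHeight x :=
    nonneg_of_mul_nonneg_right ((abs_nonneg _).trans hbound) hdeg_pos
  exact hbound.trans (mul_le_mul_of_nonneg_right (by exact_mod_cast hdeg) hheight)

theorem tendsto_log_abs_div_of_tendsto_logHeight_div {x : ℕ → ℝ} (hxK : ∀ n, x n ∈ K)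
    (hx0 : ∀ n, x n ≠ 0) (hx : Tendsto (fun n => logHeight (x n) / n) atTop (𝓝 0)) :
    Tendsto (fun n => log |x n| / n) atTop (𝓝 0) := by
  refine squeeze_zero_norm (fun n => ?_) (by simpa using hx.const_mul (Module.finrank ℚ K : ℝ))
  rw [norm_div, Real.norm_eq_abs, RCLike.norm_natCast, ← mul_div_assoc]
  exact div_le_div_of_nonneg_right (abs_log_abs_le_finrank_mul_logHeight (hxK n) (hx0 n))
    n.cast_nonneg

end FiniteDimensional

lemma tendsto_exp_atTop_nhds_zero_of_tendsto_div_natCast {s : ℕ → ℝ} {L : ℝ} (hL : L < 0)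
    (hs : Tendsto (fun n => s n / n) atTop (𝓝 L)) : Tendsto (fun n => exp (s n)) atTop (𝓝 0) := by
  refine tendsto_exp_atBot.comp ((tendsto_natCast_atTop_atTop.atTop_mul_neg hL hs).congr' ?_)
  filter_upwards [eventually_ne_atTop 0] with n hn
  exact mul_div_cancel₀ _ (Nat.cast_ne_zero.2 hn)

lemma tendsto_mul_pow_of_tendsto_log_abs_div {c : ℕ → ℝ} {q : ℝ} (hq : |q| < 1)
    (hc : Tendsto (fun n => log |c n| / n) atTop (𝓝 0)) :
    Tendsto (fun n => c n * q ^ n) atTop (𝓝 0) := by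
  obtain ⟨ρ, hqρ, hρ1⟩ := exists_between hq
  have hρ : 0 < ρ := (abs_nonneg q).trans_lt hqρ
  have hexp := tendsto_exp_atTop_nhds_zero_of_tendsto_div_natCast (log_neg hρ hρ1)
    (s := fun n => log |c n| + n * log ρ) ?_
  · refine squeeze_zero_norm (fun n => ?_) hexp
    rw [norm_mul, norm_pow, Real.norm_eq_abs, Real.norm_eq_abs, exp_add, exp_nat_mul, exp_log hρ]
    exact mul_le_mul (le_exp_log _) (pow_le_pow_left₀ (abs_nonneg q) hqρ.le n) (by positivity)
      (exp_pos _).le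
  · have hlim : Tendsto (fun n => log |c n| / n + log ρ) atTop (𝓝 (log ρ)) := by
      simpa using hc.add_const (log ρ)
    refine hlim.congr' ?_
    filter_upwards [eventually_ne_atTop 0] with n hn
    field_simp

theorem tendsto_log_abs_mul_pow_sub_mul_pow_div {a b : ℕ → ℝ} {α β : ℝ} (hβα : |β| < |α|)
    (ha0 : ∀ n, a n ≠ 0) (hb0 : ∀ n, b n ≠ 0)
    (ha : Tendsto (fun n => log |a n| / n) atTop (𝓝 0))
    (hb : Tendsto (fun n => log |b n| / n) atTop (𝓝 0)) :
    Tendsto (fun n => log |a n * α ^ n - b n * β ^ n| / n) atTop (𝓝 (log |α|)) := by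
  have hα0 : α ≠ 0 := abs_pos.1 ((abs_nonneg β).trans_lt hβα)
  set r : ℕ → ℝ := fun n => b n / a n * (β / α) ^ n
  have hr : Tendsto r atTop (𝓝 0) := by
    refine tendsto_mul_pow_of_tendsto_log_abs_div ?_ ?_
    · rwa [abs_div, div_lt_one (abs_pos.2 hα0)]
    · simpa [abs_div, log_div, sub_div, ha0, hb0] using hb.sub ha
  have hlog_one_sub : Tendsto (fun n => log |1 - r n| / n) atTop (𝓝 0) := by
    have : Tendsto (fun n => log |1 - r n|) atTop (𝓝 0) := by
      simpa using ((tendsto_const_nhds (x := (1 : ℝ))).sub hr).abs.log (by norm_num)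
    exact this.div_atTop tendsto_natCast_atTop_atTop
  have hsplit : ∀ᶠ n in atTop, log |a n * α ^ n - b n * β ^ n| / n =
      log |a n| / n + log |α| + log |1 - r n| / n := by
    filter_upwards [eventually_ne_atTop 0, hr.eventually_ne zero_ne_one] with n hn hrn
    have hfactor : a n * α ^ n - b n * β ^ n = a n * α ^ n * (1 - r n) := by
      have := ha0 n
      simp only [r, div_pow]
      field_simp
    rw [hfactor, abs_mul, abs_mul, abs_pow, log_mul, log_mul, log_pow]
    · field_simp
    all_goals simp [ha0 n, hα0, sub_eq_zero, Ne.symm hrn]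
  simpa using ((ha.add_const (log |α|)).add hlog_one_sub).congr' (hsplit.mono fun n h => h.symm)

theorem abs_u_growth_general (α β : ℝ)
    (hint : IsIntegral ℤ α) (hβ1 : |β| < 1) (hα1 : 1 < |α|)
    (a b : ℕ → ℝ)
    (hamem : ∀ n, a n ∈ (ℚ⟮α⟯ : IntermediateField ℚ ℝ))
    (hbmem : ∀ n, b n ∈ (ℚ⟮α⟯ : IntermediateField ℚ ℝ))
    (hab : ∀ n, a n * b n ≠ 0)
    (hha : Tendsto (fun n : ℕ => logHeight (a n) / (n : ℝ)) atTop (nhds 0))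
    (hhb : Tendsto (fun n : ℕ => logHeight (b n) / (n : ℝ)) atTop (nhds 0)) :
    Tendsto (fun n : ℕ => Real.log |a n * α ^ n - b n * β ^ n| / (n : ℝ))
      atTop (nhds (Real.log |α|)) := by
  have : FiniteDimensional ℚ ℚ⟮α⟯ := adjoin.finiteDimensional hint.tower_top
  have ha0 n : a n ≠ 0 := left_ne_zero_of_mul (hab n)
  have hb0 n : b n ≠ 0 := right_ne_zero_of_mul (hab n)
  exact tendsto_log_abs_mul_pow_sub_mul_pow_div (hβ1.trans hα1) ha0 hb0
    (tendsto_log_abs_div_of_tendsto_logHeight_div hamem ha0 hha)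
    (tendsto_log_abs_div_of_tendsto_logHeight_div hbmem hb0 hhb)

/-- Let `α` be a real quadratic unit with conjugate `β`, `|β| < 1 < |α|`. If
`a_n, b_n ∈ ℚ(α)` with `a_n·b_n ≠ 0`, `h(a_n)/n → 0`, `h(b_n)/n → 0`, and
`u_n := a_n·α^n - b_n·β^n ∈ ℚ` for all `n`, then `|u_n| = |α|^{n+o(n)}`, i.e.
`log|u_n|/n → log|α|`. -/
theorem abs_u_growth (α β : ℝ)
    (hint : IsIntegral ℤ α) (hdeg : (minpoly ℚ α).natDegree = 2)
    (hconj : minpoly ℚ β = minpoly ℚ α) (hne : β ≠ α)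
    (hunit : α * β = 1 ∨ α * β = -1) (hβ1 : |β| < 1) (hα1 : 1 < |α|)
    (a b : ℕ → ℝ)
    (hamem : ∀ n, a n ∈ (ℚ⟮α⟯ : IntermediateField ℚ ℝ))
    (hbmem : ∀ n, b n ∈ (ℚ⟮α⟯ : IntermediateField ℚ ℝ))
    (hab : ∀ n, a n * b n ≠ 0)
    (hu : ∀ n : ℕ, ∃ q : ℚ, a n * α ^ n - b n * β ^ n = (q : ℝ))
    (hha : Tendsto (fun n : ℕ => logHeight (a n) / (n : ℝ)) atTop (nhds 0))
    (hhb : Tendsto (fun n : ℕ => logHeight (b n) / (n : ℝ)) atTop (nhds 0)) :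
    Tendsto (fun n : ℕ => Real.log |a n * α ^ n - b n * β ^ n| / (n : ℝ))
      atTop (nhds (Real.log |α|)) :=
  abs_u_growth_general α β hint hβ1 hα1 a b hamem hbmem hab hha hhb
end

section
/- Let α be a real quadratic unit with |α| > 1, and suppose u_n = a_n·α^n - b_n·β^n ∈ ℚ with a_n, b_n ∈ ℚ(α)*, h(a_n)/n → 0, h(b_n)/n → 0. Then the multiplicative Weil height satisfies H(u_n) = |α|^{n+o(n)} as n → ∞, i.e., log H(u_n)/n → log|α|. -/
open IntermediateField Filter

/-!
Let `x` be algebraic of degree `δ`, `D` the common denominator of its minimal polynomial `P`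
and `M ≥ 1` the Mahler measure of `P`, so that `δ · h(x) = log D + log M`. Splitting the root `x`
off `P` gives `max 1 |x| ≤ M`, and the constant coefficient of `P`, a nonzero rational whose
denominator divides `D`, gives `1 ≤ D M |x|`. Hence `|x|`, `|x|⁻¹` and `D` are at most `e^{δ h(x)}`.

For `q = a_n α^n - b_n β^n ∈ ℚ` the height is `h(q) = log (den q) + log max(1, |q|)`. Since
`D(a_n) D(b_n) q` is an algebraic integer, `den q ≤ e^{2 h(a_n) + 2 h(b_n)} = e^{o(n)}`, and
`|a_n α^n| ≥ e^{-o(n)} |α|^n` while `|b_n β^n| ≤ e^{o(n)}`, so `|q| = |α|^{n + o(n)}`.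
-/

open Polynomial Real

namespace Polynomial

theorem mahlerMeasure_eq_max_one_norm_mul_divByMonic {p : ℂ[X]} {z : ℂ} (hz : p.IsRoot z) :
    p.mahlerMeasure = max 1 ‖z‖ * (p /ₘ (X - C z)).mahlerMeasure := by
  conv_lhs => rw [← mul_divByMonic_eq_iff_isRoot.mpr hz]
  rw [mahlerMeasure_mul, mahlerMeasure_X_sub_C]

theorem Monic.max_one_norm_le_mahlerMeasure {p : ℂ[X]} (hp : p.Monic) {z : ℂ}
    (hz : p.IsRoot z) : max 1 ‖z‖ ≤ p.mahlerMeasure := by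
  have hq : (p /ₘ (X - C z)).Monic :=
    (monic_X_sub_C z).of_mul_monic_left (by rwa [mul_divByMonic_eq_iff_isRoot.mpr hz])
  rw [mahlerMeasure_eq_max_one_norm_mul_divByMonic hz]
  refine le_mul_of_one_le_right (by positivity) ?_
  exact one_le_mahlerMeasure_of_one_le_norm_leadingCoeff (by simp [hq.leadingCoeff])

theorem norm_coeff_zero_le_norm_mul_mahlerMeasure {p : ℂ[X]} {z : ℂ} (hz : p.IsRoot z) :
    ‖p.coeff 0‖ ≤ ‖z‖ * p.mahlerMeasure := by
  set q := p /ₘ (X - C z)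
  have hcoeff : p.coeff 0 = -z * q.coeff 0 := by
    conv_lhs => rw [← mul_divByMonic_eq_iff_isRoot.mpr hz]
    simp [coeff_zero_eq_eval_zero, q]
  have hq : ‖q.coeff 0‖ ≤ q.mahlerMeasure := by
    simpa using norm_coeff_le_choose_mul_mahlerMeasure 0 q
  rw [hcoeff, norm_mul, norm_neg, mahlerMeasure_eq_max_one_norm_mul_divByMonic hz]
  gcongr
  exact hq.trans (le_mul_of_one_le_left (mahlerMeasure_nonneg _) (le_max_left _ _))

end Polynomial

theorem Rat.exists_natCast_mul_eq_intCast {r : ℚ} {N : ℕ} (h : r.den ∣ N) :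
    ∃ z : ℤ, (N : ℚ) * r = z := by
  obtain ⟨k, rfl⟩ := h
  exact ⟨k * r.num, by push_cast; rw [← Rat.den_mul_eq_num]; ring⟩

theorem Rat.den_dvd_of_natCast_mul_eq_intCast {r : ℚ} {N : ℕ} {z : ℤ} (hN : N ≠ 0)
    (h : (N : ℚ) * r = z) : r.den ∣ N := by
  have hr : r = Rat.divInt z N := by
    rw [Rat.divInt_eq_div, Int.cast_natCast, ← h]
    field_simp
  exact_mod_cast hr ▸ Rat.den_dvd z N

theorem Rat.one_le_natCast_mul_abs {r : ℚ} {N : ℕ} (hr : r ≠ 0) (hN : N ≠ 0) (h : r.den ∣ N) :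
    (1 : ℝ) ≤ N * |(r : ℝ)| := by
  obtain ⟨z, hz⟩ := Rat.exists_natCast_mul_eq_intCast h
  have hz0 : z ≠ 0 := by rintro rfl; simp_all
  have hzr : (N : ℝ) * r = z := by exact_mod_cast hz
  rw [← abs_of_nonneg (Nat.cast_nonneg (α := ℝ) N), ← abs_mul, hzr]
  exact_mod_cast Int.one_le_abs hz0

theorem Rat.den_dvd_of_isIntegral_natCast_mul {K : Type*} [Field K] [CharZero K] {r : ℚ} {N : ℕ}
    (hN : N ≠ 0) (h : IsIntegral ℤ ((N : K) * r)) : r.den ∣ N := by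
  have h' : IsIntegral ℤ ((N : ℚ) * r) := by
    refine (isIntegral_algebraMap_iff (algebraMap ℚ K).injective).mp ?_
    simpa using h
  obtain ⟨z, hz⟩ := IsIntegrallyClosed.isIntegral_iff.mp h'
  exact Rat.den_dvd_of_natCast_mul_eq_intCast hN (by simpa using hz.symm)

theorem isIntegral_int_of_minpoly_eq {S : Type*} [CommRing S] [IsDomain S] [Algebra ℚ S]
    {α β : S} (hα : IsIntegral ℤ α) (h : minpoly ℚ β = minpoly ℚ α) : IsIntegral ℤ β := by
  refine ⟨minpoly ℤ α, minpoly.monic hα, ?_⟩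
  have hβ := minpoly.aeval ℚ β
  rwa [h, minpoly.isIntegrallyClosed_eq_field_fractions' ℚ hα, aeval_map_algebraMap,
    aeval_def] at hβ

theorem IntermediateField.natDegree_minpoly_le_finrank {K L : Type*} [Field K] [Field L]
    [Algebra K L] {F : IntermediateField K L} [FiniteDimensional K F] {x : L} (hx : x ∈ F) :
    (minpoly K x).natDegree ≤ Module.finrank K F := by
  simpa [IntermediateField.minpoly_eq] using minpoly.natDegree_le (A := K) (⟨x, hx⟩ : F)

noncomputable def minpolyDen (x : ℝ) : ℕ :=
  (minpoly ℚ x).support.lcm fun i => ((minpoly ℚ x).coeff i).den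

noncomputable def complexMinpoly (x : ℝ) : ℂ[X] := (minpoly ℚ x).map (algebraMap ℚ ℂ)

theorem complexMinpoly_monic {x : ℝ} (hx : IsIntegral ℚ x) : (complexMinpoly x).Monic :=
  (minpoly.monic hx).map _

theorem complexMinpoly_isRoot (x : ℝ) : (complexMinpoly x).IsRoot x := by
  rw [complexMinpoly, IsRoot, eval_map_algebraMap, ← Complex.coe_algebraMap, aeval_algebraMap_apply,
    minpoly.aeval, map_zero]

theorem den_coeff_dvd_minpolyDen (x : ℝ) (i : ℕ) :
    ((minpoly ℚ x).coeff i).den ∣ minpolyDen x := by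
  by_cases hi : i ∈ (minpoly ℚ x).support
  · exact Finset.dvd_lcm hi
  · simp [notMem_support_iff.mp hi]

theorem minpolyDen_pos (x : ℝ) : 0 < minpolyDen x :=
  Nat.pos_of_ne_zero fun h => (Finset.lcm_eq_zero_iff.mp h).elim fun _ ⟨_, hi⟩ => Rat.den_nz _ hi

theorem logHeight_nonneg (x : ℝ) : 0 ≤ logHeight x := by
  refine mul_nonneg (by positivity) (add_nonneg (log_natCast_nonneg _) (Multiset.sum_nonneg ?_))
  simp only [Multiset.mem_map]
  rintro _ ⟨z, -, rfl⟩
  exact log_nonneg (le_max_left _ _)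

theorem natDegree_mul_logHeight_s11 {x : ℝ} (hx : IsIntegral ℚ x) :
    (minpoly ℚ x).natDegree * logHeight x =
      log (minpolyDen x) + log (complexMinpoly x).mahlerMeasure := by
  have hd : ((minpoly ℚ x).natDegree : ℝ) ≠ 0 := by
    exact_mod_cast (minpoly.natDegree_pos hx).ne'
  rw [← logMahlerMeasure_eq_log_MahlerMeasure,
    logMahlerMeasure_eq_log_leadingCoeff_add_sum_log_roots, (complexMinpoly_monic hx).leadingCoeff,
    logHeight, complexMinpoly, ← aroots_def]
  simp only [norm_one, log_one, zero_add, posLog_eq_log_max_one (norm_nonneg _)]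
  field_simp
  rfl

section MinpolyBounds

variable {x : ℝ} {d : ℕ}

theorem one_le_mahlerMeasure_complexMinpoly (hx : IsIntegral ℚ x) :
    1 ≤ (complexMinpoly x).mahlerMeasure :=
  one_le_mahlerMeasure_of_one_le_norm_leadingCoeff
    (by simp [(complexMinpoly_monic hx).leadingCoeff])

theorem minpolyDen_mul_mahlerMeasure_le_exp (hx : IsIntegral ℚ x)
    (hd : (minpoly ℚ x).natDegree ≤ d) :
    minpolyDen x * (complexMinpoly x).mahlerMeasure ≤ exp (d * logHeight x) := by
  have hM := one_le_mahlerMeasure_complexMinpoly hx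
  have hD : (0 : ℝ) < minpolyDen x := by exact_mod_cast minpolyDen_pos x
  rw [← exp_log (by positivity : (0 : ℝ) < minpolyDen x * (complexMinpoly x).mahlerMeasure),
    log_mul hD.ne' (by positivity), ← natDegree_mul_logHeight_s11 hx]
  gcongr
  exact logHeight_nonneg x

theorem abs_le_exp_logHeight (hx : IsIntegral ℚ x) (hd : (minpoly ℚ x).natDegree ≤ d) :
    |x| ≤ exp (d * logHeight x) :=
  calc |x| ≤ max 1 |x| := le_max_right _ _
    _ ≤ (complexMinpoly x).mahlerMeasure := by
      simpa using (complexMinpoly_monic hx).max_one_norm_le_mahlerMeasure (complexMinpoly_isRoot x)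
    _ ≤ minpolyDen x * (complexMinpoly x).mahlerMeasure :=
      le_mul_of_one_le_left (mahlerMeasure_nonneg _) (by exact_mod_cast minpolyDen_pos x)
    _ ≤ exp (d * logHeight x) := minpolyDen_mul_mahlerMeasure_le_exp hx hd

theorem minpolyDen_le_exp_logHeight (hx : IsIntegral ℚ x) (hd : (minpoly ℚ x).natDegree ≤ d) :
    (minpolyDen x : ℝ) ≤ exp (d * logHeight x) :=
  (le_mul_of_one_le_right (Nat.cast_nonneg _) (one_le_mahlerMeasure_complexMinpoly hx)).trans
    (minpolyDen_mul_mahlerMeasure_le_exp hx hd)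

theorem exp_neg_logHeight_le_abs (hx : IsIntegral ℚ x) (hd : (minpoly ℚ x).natDegree ≤ d)
    (hx0 : x ≠ 0) : exp (-(d * logHeight x)) ≤ |x| := by
  set c := (minpoly ℚ x).coeff 0
  have hc : 1 ≤ minpolyDen x * |(c : ℝ)| :=
    Rat.one_le_natCast_mul_abs (minpoly.coeff_zero_ne_zero hx hx0) (minpolyDen_pos x).ne'
      (den_coeff_dvd_minpolyDen x 0)
  have hcM : |(c : ℝ)| ≤ |x| * (complexMinpoly x).mahlerMeasure := by
    simpa [complexMinpoly, c] using
      norm_coeff_zero_le_norm_mul_mahlerMeasure (complexMinpoly_isRoot x)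
  rw [exp_neg, inv_le_iff_one_le_mul₀ (exp_pos _)]
  calc 1 ≤ minpolyDen x * |(c : ℝ)| := hc
    _ ≤ minpolyDen x * (|x| * (complexMinpoly x).mahlerMeasure) := by gcongr
    _ = |x| * (minpolyDen x * (complexMinpoly x).mahlerMeasure) := by ring
    _ ≤ |x| * exp (d * logHeight x) := by
      gcongr
      exact minpolyDen_mul_mahlerMeasure_le_exp hx hd

end MinpolyBounds

theorem minpoly_ratCast (r : ℚ) : minpoly ℚ (r : ℝ) = X - C r := by
  simpa using minpoly.eq_X_sub_C ℝ r

theorem minpolyDen_ratCast (r : ℚ) : minpolyDen r = r.den := by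
  refine Nat.dvd_antisymm (Finset.lcm_dvd fun i _ => ?_) ?_
  · rcases i with _ | _ | i <;> simp [minpoly_ratCast, coeff_X, coeff_C]
  · simpa [minpoly_ratCast] using den_coeff_dvd_minpolyDen r 0

theorem logHeight_ratCast (r : ℚ) : logHeight r = log r.den + log (max 1 |(r : ℝ)|) := by
  have h := natDegree_mul_logHeight_s11 (isIntegral_algebraMap (R := ℚ) (x := r) (A := ℝ))
  simp only [eq_ratCast, complexMinpoly, minpoly_ratCast, natDegree_X_sub_C, minpolyDen_ratCast,
    Polynomial.map_sub, map_X, map_C, mahlerMeasure_X_sub_C] at h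
  simpa using h

theorem isIntegral_minpolyDen_mul {x : ℝ} (hx : IsIntegral ℚ x) :
    IsIntegral ℤ ((minpolyDen x : ℝ) * x) := by
  obtain ⟨Q, hQ⟩ : C (minpolyDen x : ℚ) * minpoly ℚ x ∈ lifts (algebraMap ℤ ℚ) := by
    refine (lifts_iff_coeff_lifts _).mpr fun i => ?_
    obtain ⟨z, hz⟩ := Rat.exists_natCast_mul_eq_intCast (den_coeff_dvd_minpolyDen x i)
    exact ⟨z, by simp [hz]⟩
  rw [coe_mapRingHom] at hQ
  have hlc : Q.leadingCoeff = minpolyDen x := by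
    apply RingHom.injective_int (algebraMap ℤ ℚ)
    rw [← leadingCoeff_map_of_injective (RingHom.injective_int _), hQ, leadingCoeff_mul,
      leadingCoeff_C, (minpoly.monic hx).leadingCoeff]
    simp
  have hroot : aeval x Q = 0 := by
    rw [← aeval_map_algebraMap ℚ, hQ, map_mul, minpoly.aeval, mul_zero]
  simpa [hlc] using isIntegral_leadingCoeff_smul Q x hroot

section ExponentialPolynomial

variable {α β x y : ℝ} {q : ℚ} {n d : ℕ}

theorem den_dvd_minpolyDen_mul_minpolyDen (hα : IsIntegral ℤ α) (hβ : IsIntegral ℤ β)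
    (hx : IsIntegral ℚ x) (hy : IsIntegral ℚ y) (hq : x * α ^ n - y * β ^ n = q) :
    q.den ∣ minpolyDen x * minpolyDen y := by
  refine Rat.den_dvd_of_isIntegral_natCast_mul (K := ℝ)
    (Nat.mul_ne_zero (minpolyDen_pos x).ne' (minpolyDen_pos y).ne') ?_
  have hN : ((minpolyDen x * minpolyDen y : ℕ) : ℝ) * q =
      minpolyDen x * x * α ^ n * minpolyDen y - minpolyDen y * y * β ^ n * minpolyDen x := by
    push_cast
    rw [← hq]
    ring
  rw [hN]
  exact (((isIntegral_minpolyDen_mul hx).mul (hα.pow n)).mul (isIntegral_natCast _)).sub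
    (((isIntegral_minpolyDen_mul hy).mul (hβ.pow n)).mul (isIntegral_natCast _))

theorem logHeight_ratCast_le (hα : IsIntegral ℤ α) (hβ : IsIntegral ℤ β) (hα1 : 1 ≤ |α|)
    (hβ1 : |β| ≤ 1) (hx : IsIntegral ℚ x) (hxd : (minpoly ℚ x).natDegree ≤ d)
    (hy : IsIntegral ℚ y) (hyd : (minpoly ℚ y).natDegree ≤ d)
    (hq : x * α ^ n - y * β ^ n = q) :
    logHeight q ≤ n * log |α| + (log 2 + 2 * (d * (logHeight x + logHeight y))) := by
  set H := d * (logHeight x + logHeight y)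
  have hxH : d * logHeight x ≤ H :=
    mul_le_mul_of_nonneg_left (le_add_of_nonneg_right (logHeight_nonneg y)) d.cast_nonneg
  have hyH : d * logHeight y ≤ H :=
    mul_le_mul_of_nonneg_left (le_add_of_nonneg_left (logHeight_nonneg x)) d.cast_nonneg
  have hαn : |α| ^ n = exp (n * log |α|) := by
    rw [← log_pow, exp_log (by positivity)]
  have hden : (q.den : ℝ) ≤ exp H :=
    calc (q.den : ℝ) ≤ minpolyDen x * minpolyDen y := by
          exact_mod_cast Nat.le_of_dvd (Nat.mul_pos (minpolyDen_pos x) (minpolyDen_pos y))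
            (den_dvd_minpolyDen_mul_minpolyDen hα hβ hx hy hq)
      _ ≤ exp (d * logHeight x) * exp (d * logHeight y) :=
          mul_le_mul (minpolyDen_le_exp_logHeight hx hxd) (minpolyDen_le_exp_logHeight hy hyd)
            (Nat.cast_nonneg _) (exp_pos _).le
      _ = exp H := by rw [← exp_add, ← mul_add]
  have habs : |(q : ℝ)| ≤ exp (log 2 + H + n * log |α|) :=
    calc |(q : ℝ)| ≤ |x| * |α| ^ n + |y| * |β| ^ n := by
          rw [← hq, ← abs_pow, ← abs_pow, ← abs_mul, ← abs_mul]
          exact abs_sub _ _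
      _ ≤ exp H * |α| ^ n + exp H * |α| ^ n := by
          gcongr ?_ * _ + ?_
          · exact (abs_le_exp_logHeight hx hxd).trans (exp_le_exp.mpr hxH)
          · exact mul_le_mul ((abs_le_exp_logHeight hy hyd).trans (exp_le_exp.mpr hyH))
              ((pow_le_one₀ (abs_nonneg β) hβ1).trans (one_le_pow₀ hα1)) (by positivity)
              (exp_pos _).le
      _ = exp (log 2 + H + n * log |α|) := by rw [exp_add, exp_add, exp_log two_pos, hαn]; ring
  rw [logHeight_ratCast]
  have h1 : log q.den ≤ H := (log_le_iff_le_exp (by exact_mod_cast q.den_pos)).mpr hden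
  have h2 : log (max 1 |(q : ℝ)|) ≤ log 2 + H + n * log |α| := by
    rw [log_le_iff_le_exp (by positivity)]
    refine max_le (one_le_exp ?_) habs
    have hH : 0 ≤ H :=
      mul_nonneg d.cast_nonneg (add_nonneg (logHeight_nonneg x) (logHeight_nonneg y))
    have hL : 0 ≤ n * log |α| := mul_nonneg n.cast_nonneg (log_nonneg hα1)
    linarith [log_nonneg one_le_two]
  linarith

theorem le_logHeight_ratCast (hα0 : α ≠ 0) (hβ1 : |β| ≤ 1) (hx : IsIntegral ℚ x)
    (hxd : (minpoly ℚ x).natDegree ≤ d) (hx0 : x ≠ 0) (hy : IsIntegral ℚ y)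
    (hyd : (minpoly ℚ y).natDegree ≤ d)
    (hsmall : log 2 + d * (logHeight x + logHeight y) ≤ n * log |α|)
    (hq : x * α ^ n - y * β ^ n = q) :
    n * log |α| - (log 2 + d * logHeight x) ≤ logHeight q := by
  set L := n * log |α|
  have hαn : exp L = |α| ^ n := by
    rw [show L = log (|α| ^ n) from (log_pow |α| n).symm, exp_log (by positivity)]
  have hxα : exp (L - d * logHeight x) ≤ |x * α ^ n| := by
    rw [abs_mul, abs_pow, sub_eq_neg_add, exp_add, hαn]
    gcongr
    exact exp_neg_logHeight_le_abs hx hxd hx0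
  have hyβ : |y * β ^ n| ≤ exp (L - (log 2 + d * logHeight x)) :=
    calc |y * β ^ n| ≤ |y| := by
          rw [abs_mul, abs_pow]
          exact mul_le_of_le_one_right (abs_nonneg y) (pow_le_one₀ (abs_nonneg β) hβ1)
      _ ≤ exp (d * logHeight y) := abs_le_exp_logHeight hy hyd
      _ ≤ exp (L - (log 2 + d * logHeight x)) := by
          rw [exp_le_exp]
          linarith [mul_add (d : ℝ) (logHeight x) (logHeight y)]
  have hsplit : exp (L - d * logHeight x) = 2 * exp (L - (log 2 + d * logHeight x)) := by
    rw [← exp_log (two_pos : (0 : ℝ) < 2), ← exp_add, exp_log two_pos]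
    ring_nf
  have hq' : exp (L - (log 2 + d * logHeight x)) ≤ |(q : ℝ)| := by
    rw [← hq]
    linarith [abs_sub_abs_le_abs_sub (x * α ^ n) (y * β ^ n)]
  rw [logHeight_ratCast, ← log_exp (L - _)]
  calc log (exp (L - (log 2 + d * logHeight x))) ≤ log (max 1 |(q : ℝ)|) :=
        log_le_log (exp_pos _) (hq'.trans (le_max_right _ _))
    _ ≤ log q.den + log (max 1 |(q : ℝ)|) := le_add_of_nonneg_left (log_natCast_nonneg _)

end ExponentialPolynomial

theorem tendsto_div_natCast_of_abs_sub_le {f E : ℕ → ℝ} {L : ℝ} (hL : 0 < L)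
    (hE : Tendsto (fun n : ℕ => E n / n) atTop (nhds 0))
    (h : ∀ n : ℕ, E n ≤ n * L → |f n - n * L| ≤ E n) :
    Tendsto (fun n : ℕ => f n / n) atTop (nhds L) := by
  rw [tendsto_iff_norm_sub_tendsto_zero]
  refine squeeze_zero' (Eventually.of_forall fun n => norm_nonneg _) ?_ hE
  filter_upwards [hE.eventually (gt_mem_nhds hL), eventually_gt_atTop 0] with n hEn hn
  have hn' : (0 : ℝ) < n := by exact_mod_cast hn
  rw [div_lt_iff₀ hn'] at hEn
  rw [Real.norm_eq_abs, show f n / n - L = (f n - n * L) / n by field_simp, abs_div,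
    abs_of_pos hn']
  exact div_le_div_of_nonneg_right (h n (by linarith)) hn'.le

theorem height_u_growth_general (α β : ℝ)
    (hint : IsIntegral ℤ α) (hdeg : (minpoly ℚ α).natDegree = 2)
    (hconj : minpoly ℚ β = minpoly ℚ α)
    (hβ1 : |β| < 1) (hα1 : 1 < |α|)
    (a b : ℕ → ℝ)
    (hamem : ∀ n, a n ∈ (ℚ⟮α⟯ : IntermediateField ℚ ℝ))
    (hbmem : ∀ n, b n ∈ (ℚ⟮α⟯ : IntermediateField ℚ ℝ))
    (ha0 : ∀ n, a n ≠ 0)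
    (hu : ∀ n : ℕ, ∃ q : ℚ, a n * α ^ n - b n * β ^ n = (q : ℝ))
    (hha : Tendsto (fun n : ℕ => logHeight (a n) / (n : ℝ)) atTop (nhds 0))
    (hhb : Tendsto (fun n : ℕ => logHeight (b n) / (n : ℝ)) atTop (nhds 0)) :
    Tendsto (fun n : ℕ => logHeight (a n * α ^ n - b n * β ^ n) / (n : ℝ))
      atTop (nhds (Real.log |α|)) := by
  have hαℚ : IsIntegral ℚ α := hint.tower_top
  have : FiniteDimensional ℚ ℚ⟮α⟯ := adjoin.finiteDimensional hαℚ
  have hK : ∀ {x}, x ∈ ℚ⟮α⟯ → IsIntegral ℚ x ∧ (minpoly ℚ x).natDegree ≤ 2 := fun hx =>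
    ⟨isIntegral_iff.mp (IsIntegral.of_finite ℚ ⟨_, hx⟩),
      (natDegree_minpoly_le_finrank hx).trans (by rw [adjoin.finrank hαℚ, hdeg])⟩
  have hβ : IsIntegral ℤ β := isIntegral_int_of_minpoly_eq hint hconj
  refine tendsto_div_natCast_of_abs_sub_le (log_pos hα1)
    (E := fun n => log 2 + 2 * (2 * (logHeight (a n) + logHeight (b n)))) ?_ fun n hn => ?_
  · convert (tendsto_const_div_atTop_nhds_zero_nat (log 2)).add
      (((hha.add hhb).const_mul 2).const_mul 2) using 2 <;> ring
  · obtain ⟨q, hq⟩ := hu n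
    obtain ⟨hai, had⟩ := hK (hamem n)
    obtain ⟨hbi, hbd⟩ := hK (hbmem n)
    have hupper := logHeight_ratCast_le hint hβ hα1.le hβ1.le hai had hbi hbd hq
    have hlower := le_logHeight_ratCast (n := n) (abs_pos.mp (one_pos.trans hα1)) hβ1.le hai had
      (ha0 n) hbi hbd (by push_cast; linarith [logHeight_nonneg (a n), logHeight_nonneg (b n)]) hq
    rw [hq, abs_sub_le_iff]
    push_cast at hupper hlower ⊢
    constructor <;> linarith [logHeight_nonneg (a n), logHeight_nonneg (b n)]

/-- Let `α` be a real quadratic unit with conjugate `β`, `|β| < 1 < |α|`. If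
`u_n = a_n·α^n - b_n·β^n ∈ ℚ` with `a_n, b_n ∈ ℚ(α)^*` and `h(a_n)/n → 0`,
`h(b_n)/n → 0`, then the Weil height satisfies `H(u_n) = |α|^{n+o(n)}`, i.e.
`log H(u_n)/n → log|α|`. -/
theorem height_u_growth (α β : ℝ)
    (hint : IsIntegral ℤ α) (hdeg : (minpoly ℚ α).natDegree = 2)
    (hconj : minpoly ℚ β = minpoly ℚ α) (hne : β ≠ α)
    (hunit : α * β = 1 ∨ α * β = -1) (hβ1 : |β| < 1) (hα1 : 1 < |α|)
    (a b : ℕ → ℝ)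
    (hamem : ∀ n, a n ∈ (ℚ⟮α⟯ : IntermediateField ℚ ℝ))
    (hbmem : ∀ n, b n ∈ (ℚ⟮α⟯ : IntermediateField ℚ ℝ))
    (ha0 : ∀ n, a n ≠ 0) (hb0 : ∀ n, b n ≠ 0)
    (hu : ∀ n : ℕ, ∃ q : ℚ, a n * α ^ n - b n * β ^ n = (q : ℝ))
    (hha : Tendsto (fun n : ℕ => logHeight (a n) / (n : ℝ)) atTop (nhds 0))
    (hhb : Tendsto (fun n : ℕ => logHeight (b n) / (n : ℝ)) atTop (nhds 0)) :
    Tendsto (fun n : ℕ => logHeight (a n * α ^ n - b n * β ^ n) / (n : ℝ))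
      atTop (nhds (Real.log |α|)) :=
  height_u_growth_general α β hint hdeg hconj hβ1 hα1 a b hamem hbmem ha0 hu hha hhb
end

section
/- Let c > 2, Q a positive integer, and let n_1 < n_2 < ... satisfy n_{k+1}/n_k ≥ c and n_{k+1}/n_k ≤ 5 for all k. For subsets T of {1,...,Q}, define Σ(N,T) = ∑_{i∈T} n_{N-P+i} - ∑_{i∉T} n_{N-P+i} (for fixed P > Q and N large). Then for any two distinct subsets T ≠ T' of {1,...,Q}, |Σ(N,T) - Σ(N,T')| ≥ (2(c-2)/((c-1)·5^{P-1}))·n_N. -/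
/-!
Write `a i = n_{N-P+i}`. Since consecutive terms grow by a factor at least `c`, the terms below
any index `j` sum to at most `a j / (c - 1)`. For `T ≠ T'`, let `j` be the largest element of
`T ∆ T'`: the difference `∑_T a - ∑_{T'} a` is then dominated by `± a j`, so its absolute value
is at least `(c - 2)/(c - 1) · a j`, while the upper ratio bound gives `n_N ≤ 5^{P-1} a j`.
-/

open Finset
open scoped symmDiff

section Lacunary

variable {a : ℕ → ℝ} {c : ℝ} {m : ℕ}

theorem sub_one_mul_sum_Ico_le (h0 : 0 ≤ a m) (hc : ∀ k, m ≤ k → c * a k ≤ a (k + 1))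
    {j : ℕ} (hj : m ≤ j) : (c - 1) * ∑ k ∈ Ico m j, a k ≤ a j := by
  induction j, hj using Nat.le_induction with
  | base => simpa using h0
  | succ j hmj ih =>
    rw [sum_Ico_succ_top hmj, mul_add]
    linarith [hc j hmj]

theorem sub_two_mul_le_sum_sub_sum (hc1 : 1 ≤ c) (ha : ∀ k, 0 ≤ a k)
    (hc : ∀ k, m ≤ k → c * a k ≤ a (k + 1)) {A B : Finset ℕ} (hB : ∀ i ∈ B, m ≤ i) {j : ℕ}
    (hmj : m ≤ j) (hj : j ∈ A \ B) (hmax : ∀ i ∈ A ∆ B, i ≤ j) :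
    (c - 2) * a j ≤ (c - 1) * (∑ i ∈ A, a i - ∑ i ∈ B, a i) := by
  have hjA : a j ≤ ∑ i ∈ A \ B, a i := single_le_sum (fun i _ ↦ ha i) hj
  have hBA : B \ A ⊆ Ico m j := fun i hi ↦ mem_Ico.2 ⟨hB i (mem_sdiff.1 hi).1,
    (hmax i (mem_symmDiff.2 (Or.inr (mem_sdiff.1 hi)))).lt_of_ne
      (by rintro rfl; exact (mem_sdiff.1 hj).2 (mem_sdiff.1 hi).1)⟩
  have hsum : ∑ i ∈ B \ A, a i ≤ ∑ i ∈ Ico m j, a i :=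
    sum_le_sum_of_subset_of_nonneg hBA (fun i _ _ ↦ ha i)
  have hlac := sub_one_mul_sum_Ico_le (ha m) hc hmj
  rw [← sum_sdiff_sub_sum_sdiff]
  nlinarith

theorem exists_mem_symmDiff_sub_two_mul_le_abs (hc1 : 1 ≤ c) (ha : ∀ k, 0 ≤ a k)
    (hc : ∀ k, m ≤ k → c * a k ≤ a (k + 1)) {A B : Finset ℕ} (hA : ∀ i ∈ A, m ≤ i)
    (hB : ∀ i ∈ B, m ≤ i) (hAB : A ≠ B) :
    ∃ j ∈ A ∆ B, (c - 2) * a j ≤ (c - 1) * |∑ i ∈ A, a i - ∑ i ∈ B, a i| := by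
  have hne : (A ∆ B).Nonempty := symmDiff_nonempty.2 hAB
  refine ⟨(A ∆ B).max' hne, max'_mem _ hne, ?_⟩
  have hmax : ∀ i ∈ A ∆ B, i ≤ (A ∆ B).max' hne := le_max' _
  have hc1' : 0 ≤ c - 1 := sub_nonneg.2 hc1
  rcases mem_symmDiff.1 (max'_mem _ hne) with hj | hj
  · calc _ ≤ (c - 1) * (∑ i ∈ A, a i - ∑ i ∈ B, a i) :=
          sub_two_mul_le_sum_sub_sum hc1 ha hc hB (hA _ hj.1) (mem_sdiff.2 hj) hmax
      _ ≤ _ := mul_le_mul_of_nonneg_left (le_abs_self _) hc1'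
  · calc _ ≤ (c - 1) * (∑ i ∈ B, a i - ∑ i ∈ A, a i) :=
          sub_two_mul_le_sum_sub_sum hc1 ha hc hA (hB _ hj.1) (mem_sdiff.2 hj)
            (symmDiff_comm A B ▸ hmax)
      _ ≤ _ := mul_le_mul_of_nonneg_left (abs_sub_comm (∑ i ∈ A, a i) _ ▸ le_abs_self _) hc1'

end Lacunary

theorem signed_sums_gap_general (c : ℝ) (hc : 2 < c) (Q P : ℕ) (hQP : Q < P)
    (n : ℕ → ℕ)
    (hratio : ∀ k, 1 ≤ k → c * (n k : ℝ) ≤ (n (k + 1) : ℝ))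
    (hratio5 : ∀ k, 1 ≤ k → (n (k + 1) : ℝ) ≤ 5 * (n k : ℝ)) :
    ∀ N, P ≤ N → ∀ T T' : Finset ℕ, T ⊆ Finset.Icc 1 Q → T' ⊆ Finset.Icc 1 Q → T ≠ T' →
      |((∑ i ∈ T, (n (N - P + i) : ℝ)) - ∑ i ∈ Finset.Icc 1 Q \ T, (n (N - P + i) : ℝ)) -
        ((∑ i ∈ T', (n (N - P + i) : ℝ)) - ∑ i ∈ Finset.Icc 1 Q \ T', (n (N - P + i) : ℝ))| ≥
      (2 * (c - 2) / ((c - 1) * 5 ^ (P - 1))) * (n N : ℝ) := by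
  intro N hN T T' hT hT' hTT'
  obtain ⟨j, hj, hgap⟩ :=
    exists_mem_symmDiff_sub_two_mul_le_abs (a := fun i ↦ (n (N - P + i) : ℝ)) (c := c) (m := 1)
      (by linarith) (fun _ ↦ Nat.cast_nonneg _) (fun k hk ↦ hratio (N - P + k) (by omega))
      (fun i hi ↦ (mem_Icc.1 (hT hi)).1) (fun i hi ↦ (mem_Icc.1 (hT' hi)).1) hTT'
  obtain ⟨hj1, hjQ⟩ : 1 ≤ j ∧ j ≤ Q :=
    mem_Icc.1 ((mem_symmDiff.1 hj).elim (fun h ↦ hT h.1) (fun h ↦ hT' h.1))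
  have hnN : (n N : ℝ) ≤ 5 ^ (P - 1) * n (N - P + j) :=
    calc (n N : ℝ) = n (N - P + j + (P - j)) := by congr 2; omega
      _ ≤ 5 ^ (P - j) * n (N - P + j) :=
        le_geom (u := fun k ↦ (n (N - P + j + k) : ℝ)) (by norm_num) _
          (fun k _ ↦ hratio5 (N - P + j + k) (by omega))
      _ ≤ 5 ^ (P - 1) * n (N - P + j) :=
        mul_le_mul_of_nonneg_right (pow_le_pow_right₀ (by norm_num) (by omega)) (Nat.cast_nonneg _)
  rw [sum_sdiff_eq_sub hT, sum_sdiff_eq_sub hT', ge_iff_le, div_mul_eq_mul_div,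
    div_le_iff₀ (mul_pos (by linarith) (by positivity))]
  calc 2 * (c - 2) * (n N : ℝ) ≤ 2 * (c - 2) * (5 ^ (P - 1) * n (N - P + j)) := by gcongr
    _ = 2 * 5 ^ (P - 1) * ((c - 2) * n (N - P + j)) := by ring
    _ ≤ 2 * 5 ^ (P - 1) *
          ((c - 1) * |∑ i ∈ T, (n (N - P + i) : ℝ) - ∑ i ∈ T', (n (N - P + i) : ℝ)|) := by
        gcongr
    _ = _ := by
        rw [show ∀ x y z : ℝ, x - (z - x) - (y - (z - y)) = 2 * (x - y) by intros; ring, abs_mul,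
          abs_two]
        ring

/-- Let `c > 2`, `1 ≤ Q < P`, and `n_1 < n_2 < ...` with `c ≤ n_{k+1}/n_k ≤ 5`. For
`T ⊆ {1,...,Q}` set `Σ(N,T) = ∑_{i∈T} n_{N-P+i} - ∑_{i∉T} n_{N-P+i}`. Then for `N ≥ P`
and distinct subsets `T ≠ T'` of `{1,...,Q}`,
`|Σ(N,T) - Σ(N,T')| ≥ (2(c-2)/((c-1)·5^{P-1}))·n_N`. -/
theorem signed_sums_gap (c : ℝ) (hc : 2 < c) (Q P : ℕ) (hQ : 1 ≤ Q) (hQP : Q < P)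
    (n : ℕ → ℕ)
    (hpos : 0 < n 1)
    (hmono : ∀ k, 1 ≤ k → n k < n (k + 1))
    (hratio : ∀ k, 1 ≤ k → c * (n k : ℝ) ≤ (n (k + 1) : ℝ))
    (hratio5 : ∀ k, 1 ≤ k → (n (k + 1) : ℝ) ≤ 5 * (n k : ℝ)) :
    ∀ N, P ≤ N → ∀ T T' : Finset ℕ, T ⊆ Finset.Icc 1 Q → T' ⊆ Finset.Icc 1 Q → T ≠ T' →
      |((∑ i ∈ T, (n (N - P + i) : ℝ)) - ∑ i ∈ Finset.Icc 1 Q \ T, (n (N - P + i) : ℝ)) -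
        ((∑ i ∈ T', (n (N - P + i) : ℝ)) - ∑ i ∈ Finset.Icc 1 Q \ T', (n (N - P + i) : ℝ))| ≥
      (2 * (c - 2) / ((c - 1) * 5 ^ (P - 1))) * (n N : ℝ) :=
  signed_sums_gap_general c hc Q P hQP n hratio hratio5
end
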